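/- arXiv:1901.07661 — 2 statements merged into one kernel-verified Lean document; each statement's English description precedes it below -/
import Mathlib

section
/- Let p be a prime and n ≥ 1. The polynomial φ_p^n(x) − 1, where φ_p^n denotes the n-fold composition of φ_p(x) = (x^p − x)/p with itself, has exactly p^n distinct roots in ℤ_p; in particular φ_p^n(x) − 1 splits completely into distinct linear factors over ℚ_p, so every algebraic number α with φ_p^n(α) = 1 is totally p-adic. -/
open Polynomial

/-- The polynomial `φ_p(x) = (1/p)(x^p − x) ∈ ℚ[x]`. -/
noncomputable def phiPoly (p : ℕ) : Polynomial ℚ :=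
  Polynomial.C (1 / (p : ℚ)) * (Polynomial.X ^ p - Polynomial.X)

/-- The `n`-fold composition (iterate) `φ_p^n` of `φ_p`, as a polynomial in `ℚ[x]`. -/
noncomputable def phiPolyIter (p n : ℕ) : Polynomial ℚ :=
  (fun q => (phiPoly p).comp q)^[n] Polynomial.X

/-!
For `c ∈ ℤ_p`, the polynomial `X^p - X - pc` reduces modulo `p` to `X^p - X`, whose roots are all
of `𝔽_p` and are simple; by Hensel's lemma each lifts, so `φ_p(z) = c` has `p` solutions
`z ∈ ℤ_p`, one in each residue class. By induction `φ_p^n(x) = 1` has at least `p^n` solutions in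
`ℤ_p`. Since `φ_p^n - 1` has degree `p^n`, these are all of its roots in `ℚ_p`, each simple, so it
splits over `ℚ_p`, and so does the minimal polynomial of any of its complex roots, which divides it.
-/

section Iterates

variable {p : ℕ}

lemma natDegree_phiPoly (hp : 2 ≤ p) : (phiPoly p).natDegree = p := by
  have hp0 : (1 / (p : ℚ)) ≠ 0 := by positivity
  rw [phiPoly, natDegree_C_mul hp0, natDegree_sub_eq_left_of_natDegree_lt] <;>
    simp only [natDegree_X_pow, natDegree_X]
  omega

lemma natDegree_phiPolyIter (hp : 2 ≤ p) (n : ℕ) : (phiPolyIter p n).natDegree = p ^ n := by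
  rw [phiPolyIter, natDegree_iterate_comp, natDegree_X, mul_one, natDegree_phiPoly hp]

lemma aeval_phiPoly {K : Type*} [Field K] [Algebra ℚ K] (y : K) :
    aeval y (phiPoly p) = (y ^ p - y) / p := by
  simp [phiPoly, div_eq_inv_mul]

lemma aeval_phiPolyIter {A : Type*} [CommRing A] [Algebra ℚ A] (x : A) (n : ℕ) :
    aeval x (phiPolyIter p n) = (fun y => aeval y (phiPoly p))^[n] x := by
  simp only [phiPolyIter, aeval_def, iterate_comp_eval₂, eval₂_X]

lemma aeval_phiPolyIter_succ {A : Type*} [CommRing A] [Algebra ℚ A] (x : A) (n : ℕ) :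
    aeval x (phiPolyIter p (n + 1)) = aeval (aeval x (phiPoly p)) (phiPolyIter p n) := by
  rw [aeval_phiPolyIter, Function.iterate_succ_apply, ← aeval_phiPolyIter]

end Iterates

namespace PadicInt

variable {p : ℕ} [Fact p.Prime]

lemma norm_lt_one_iff_toZMod_eq_zero (x : ℤ_[p]) : ‖x‖ < 1 ↔ toZMod x = 0 := by
  rw [← RingHom.mem_ker, ker_toZMod, IsLocalRing.mem_maximalIdeal, mem_nonunits]

lemma norm_eq_one_of_toZMod_ne_zero {x : ℤ_[p]} (hx : toZMod x ≠ 0) : ‖x‖ = 1 :=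
  (norm_le_one x).antisymm (not_lt.mp ((norm_lt_one_iff_toZMod_eq_zero x).not.mpr hx))

lemma exists_pow_sub_self_eq {c : ℤ_[p]} (hc : toZMod c = 0) (r : ZMod p) :
    ∃ z : ℤ_[p], z ^ p - z = c ∧ toZMod z = r := by
  set F : ℤ_[p][X] := X ^ p - X - C c
  set a : ℤ_[p] := (r.val : ℤ_[p])
  have hr : toZMod a = r := by simp [a]
  have hFa : toZMod (F.aeval a) = 0 := by
    simp [F, hr, hc, ZMod.pow_card]
  have hF'a : ‖F.derivative.aeval a‖ = 1 := by
    refine norm_eq_one_of_toZMod_ne_zero ?_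
    simp [F, derivative_X_pow]
  obtain ⟨z, hz, hza, -⟩ := hensels_lemma (F := F) (a := a) (by
    rw [hF'a, one_pow, norm_lt_one_iff_toZMod_eq_zero]; exact hFa)
  refine ⟨z, by simpa [F, sub_eq_zero] using hz, ?_⟩
  rw [hF'a, norm_lt_one_iff_toZMod_eq_zero, map_sub, sub_eq_zero] at hza
  rw [hza, hr]

end PadicInt

section Roots

variable {p : ℕ} [Fact p.Prime]

lemma exists_aeval_phiPoly_eq (c : ℤ_[p]) (r : ZMod p) :
    ∃ z : ℤ_[p], aeval (z : ℚ_[p]) (phiPoly p) = c ∧ PadicInt.toZMod z = r := by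
  obtain ⟨z, hz, hzr⟩ := PadicInt.exists_pow_sub_self_eq (c := (p : ℤ_[p]) * c) (by simp) r
  refine ⟨z, ?_, hzr⟩
  have hp : (p : ℚ_[p]) ≠ 0 := by exact_mod_cast (Fact.out : p.Prime).ne_zero
  have hz' : (z : ℚ_[p]) ^ p - z = p * c := by exact_mod_cast congrArg ((↑) : ℤ_[p] → ℚ_[p]) hz
  rw [aeval_phiPoly, hz', mul_div_cancel_left₀ _ hp]

lemma exists_finset_card_eq_pow_aeval_phiPolyIter_eq_one (n : ℕ) :
    ∃ T : Finset ℤ_[p], T.card = p ^ n ∧ ∀ x ∈ T, aeval (x : ℚ_[p]) (phiPolyIter p n) = 1 := by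
  induction n with
  | zero => exact ⟨{1}, by simp, by simp [phiPolyIter]⟩
  | succ n ih =>
    classical
    obtain ⟨T, hTcard, hT⟩ := ih
    choose f hf_phi hf_res using exists_aeval_phiPoly_eq (p := p)
    have hf_inj : Function.Injective fun cr : ℤ_[p] × ZMod p => f cr.1 cr.2 := by
      rintro ⟨c, r⟩ ⟨d, s⟩ h
      have h' : f c r = f d s := h
      have hcd : (c : ℚ_[p]) = d := by rw [← hf_phi c r, ← hf_phi d s, h']
      have hrs : r = s := by rw [← hf_res c r, ← hf_res d s, h']
      exact Prod.ext (Subtype.ext hcd) hrs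
    refine ⟨(T ×ˢ Finset.univ).image fun cr => f cr.1 cr.2, ?_, ?_⟩
    · rw [Finset.card_image_of_injective _ hf_inj, Finset.card_product, Finset.card_univ,
        ZMod.card, hTcard, pow_succ]
    · simp only [Finset.mem_image, Finset.mem_product, Finset.mem_univ, and_true]
      rintro _ ⟨⟨c, r⟩, hc, rfl⟩
      rw [aeval_phiPolyIter_succ, hf_phi]
      exact hT c hc

end Roots

theorem phi_iter_minus_one_splits_totally_p_adic_general (p : ℕ) [Fact p.Prime] (n : ℕ) :
    {x : ℤ_[p] | Polynomial.aeval (x : ℚ_[p]) (phiPolyIter p n) = 1}.ncard = p ^ n ∧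
    ((phiPolyIter p n - 1).map (algebraMap ℚ ℚ_[p])).roots.Nodup ∧
    Multiset.card ((phiPolyIter p n - 1).map (algebraMap ℚ ℚ_[p])).roots = p ^ n ∧
    ((phiPolyIter p n - 1).map (algebraMap ℚ ℚ_[p])).Splits ∧
    (∀ α : ℂ, Polynomial.aeval α (phiPolyIter p n) = 1 →
      ((minpoly ℚ α).map (algebraMap ℚ ℚ_[p])).Splits) := by
  obtain ⟨T, hTcard, hT⟩ := exists_finset_card_eq_pow_aeval_phiPolyIter_eq_one (p := p) n
  set g := (phiPolyIter p n - 1).map (algebraMap ℚ ℚ_[p])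
  have hg_root (x : ℚ_[p]) : g.IsRoot x ↔ aeval x (phiPolyIter p n) = 1 := by
    simp [g, eval_map, ← aeval_def, sub_eq_zero]
  have hg_deg : g.natDegree = p ^ n := by
    rw [natDegree_map, ← C_1, natDegree_sub_C, natDegree_phiPolyIter (Fact.out : p.Prime).two_le]
  have hg0 : g ≠ 0 := ne_zero_of_natDegree_gt (hg_deg ▸ pow_pos (Fact.out : p.Prime).pos n)
  set ι : ℤ_[p] ↪ ℚ_[p] := Function.Embedding.subtype _
  have hg_roots : g.roots = (T.map ι).val := by
    refine roots_eq_of_natDegree_le_card_of_ne_zero ?_ (by simp [hg_deg, hTcard]) hg0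
    intro x hx
    obtain ⟨y, hy, rfl⟩ := Finset.mem_map.mp hx
    exact (hg_root _).mpr (hT y hy)
  have hS : {x : ℤ_[p] | aeval (x : ℚ_[p]) (phiPolyIter p n) = 1} = T := by
    ext x
    rw [Set.mem_ofPred_eq, ← hg_root, ← mem_roots hg0, hg_roots]
    exact Finset.mem_map' ι
  have hg_splits : g.Splits := by
    rw [splits_iff_card_roots, hg_roots, hg_deg]; simp [hTcard]
  refine ⟨?_, ?_, ?_, hg_splits, fun α hα => ?_⟩
  · rw [hS, Set.ncard_coe_finset, hTcard]
  · rw [hg_roots]; exact (T.map ι).nodup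
  · rw [hg_roots, Finset.card_val, Finset.card_map, hTcard]
  · have hα_root : aeval α (phiPolyIter p n - 1) = 0 := by rw [map_sub, hα, map_one, sub_self]
    exact hg_splits.of_dvd hg0 (Polynomial.map_dvd _ (minpoly.dvd ℚ α hα_root))

/-- For a prime `p` and `n ≥ 1`, the polynomial `φ_p^n(x) − 1` has exactly
`p^n` distinct roots in `ℤ_p`; in particular it splits completely into distinct linear factors
over `ℚ_p`, so every algebraic number `α` with `φ_p^n(α) = 1` is totally `p`-adic (its minimal
polynomial over `ℚ` splits completely over `ℚ_p`). -/
theorem phi_iter_minus_one_splits_totally_p_adic (p : ℕ) [Fact p.Prime] (n : ℕ) (hn : 1 ≤ n) :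
    {x : ℤ_[p] | Polynomial.aeval (x : ℚ_[p]) (phiPolyIter p n) = 1}.ncard = p ^ n ∧
    ((phiPolyIter p n - 1).map (algebraMap ℚ ℚ_[p])).roots.Nodup ∧
    Multiset.card ((phiPolyIter p n - 1).map (algebraMap ℚ ℚ_[p])).roots = p ^ n ∧
    ((phiPolyIter p n - 1).map (algebraMap ℚ ℚ_[p])).Splits ∧
    (∀ α : ℂ, Polynomial.aeval α (phiPolyIter p n) = 1 →
      ((minpoly ℚ α).map (algebraMap ℚ ℚ_[p])).Splits) :=
  phi_iter_minus_one_splits_totally_p_adic_general p n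
end

section
/- Let p be a prime. For each n ≥ 1 choose α_n ∈ ℚ̄ with φ_p^n(α_n) = 1, where φ_p(x) = (x^p − x)/p. Then {α_n} is a sequence of pairwise distinct totally p-adic algebraic numbers with h(α_n) ≤ log(p+1)/(p−1) for all n ≥ 1. In particular, for every real B > log(p+1)/(p−1), the set of totally p-adic algebraic numbers α with h(α) ≤ B is infinite. -/
open Polynomial

/-- The least positive integer `c` such that `c·P` has integer coefficients (the lcm of the
denominators of the coefficients of `P ∈ ℚ[x]`). -/
def ratDen (P : Polynomial ℚ) : ℕ :=
  (Finset.range (P.natDegree + 1)).lcm fun i => (P.coeff i).den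

/-- The absolute logarithmic Weil height of an algebraic number `α ∈ ℂ`:
if `P = minpoly ℚ α` has degree `d`, denominator `c = ratDen P`, and complex roots
`β_1, …, β_d`, then `h(α) = (1/d)(log c + Σ_i log⁺|β_i|)`.  (By Gauss's lemma and the
product formula this agrees with the usual definition
`h(α) = (1/[ℚ(α):ℚ]) Σ_{v ∈ M_ℚ} Σ_{β ∈ O_α} log⁺|β|_v`.) -/
noncomputable def weilHeight (α : ℂ) : ℝ :=
  ((minpoly ℚ α).natDegree : ℝ)⁻¹ *
    (Real.log (ratDen (minpoly ℚ α)) +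
      (((minpoly ℚ α).aroots ℂ).map fun β => Real.log (max 1 ‖β‖)).sum)

/-- The map `φ_p(x) = (x^p − x)/p` on the complex numbers. -/
noncomputable def phiC (p : ℕ) : ℂ → ℂ := fun x => (x ^ p - x) / p

/-!
Every root `x` of `φ_p^n(x) = 1` is a root of the monic integer polynomial
`p ^ (1 + p + ⋯ + p ^ (n - 1)) * (φ_p^n(X) - 1)`, so `α_n` is an algebraic integer whose conjugates
`β` again satisfy `φ_p^n(β) = 1`, and `h(α_n)` is the average of `log⁺|β|` over them.
Archimedean bound: where `|x| ^ (p - 1) > p + 1` one has `|φ_p(x)| > |x| > 1`, so all conjugates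
satisfy `|β| ^ (p - 1) ≤ p + 1`, i.e. `log⁺|β| ≤ log (p + 1) / (p - 1)`.
`p`-adically, Hensel's lemma makes `φ_p` a `p`-to-one map on `ℤ_p` (`X ^ p - X - p y` reduces to
`X ^ p - X` mod `p`), so `φ_p^n(x) = 1` has `p ^ n` solutions in `ℤ_p`, as many as the degree:
the polynomial splits over `ℚ_p`. Finally `φ_p(1) = φ_p(0) = 0`, so `φ_p^m(x) = 1` forbids
`φ_p^n(x) = 1` for `n > m`, and the `α_n` are distinct.
-/

theorem Function.exists_finset_card_pow_iterate_eq {α : Type*} (f : α → α) (S : Set α) (k : ℕ)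
    (hf : ∀ y ∈ S, ∃ t : Finset α, t.card = k ∧ ∀ x ∈ t, x ∈ S ∧ f x = y) (n : ℕ) :
    ∀ y ∈ S, ∃ t : Finset α, t.card = k ^ n ∧ ∀ x ∈ t, x ∈ S ∧ f^[n] x = y := by
  classical
  induction n with
  | zero => exact fun y hy => ⟨{y}, by simp, by simpa using hy⟩
  | succ n ih =>
    intro y hy
    obtain ⟨t, ht_card, ht⟩ := hf y hy
    choose! T hT_card hT using ih
    refine ⟨t.biUnion T, ?_, ?_⟩
    · have hdisj : (t : Set α).PairwiseDisjoint T := fun w hw w' hw' hne =>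
        Finset.disjoint_left.mpr fun x hxw hxw' =>
          hne (((hT w (ht w hw).1 x hxw).2).symm.trans (hT w' (ht w' hw').1 x hxw').2)
      rw [Finset.card_biUnion hdisj, Finset.sum_congr rfl fun w hw => hT_card w (ht w hw).1,
        Finset.sum_const, ht_card, smul_eq_mul, pow_succ, mul_comm]
    · simp only [Finset.mem_biUnion, forall_exists_index, and_imp]
      intro x w hw hxw
      obtain ⟨hxS, hx⟩ := hT w (ht w hw).1 x hxw
      exact ⟨hxS, by rw [Function.iterate_succ_apply', hx, (ht w hw).2]⟩

theorem Polynomial.splits_of_natDegree_le_card {K : Type*} [Field K] {f : K[X]} (hf : f ≠ 0)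
    (s : Finset K) (hs : ∀ x ∈ s, f.IsRoot x) (hcard : f.natDegree ≤ s.card) : f.Splits := by
  classical
  have hsub : s ⊆ f.roots.toFinset := fun x hx =>
    Multiset.mem_toFinset.mpr ((mem_roots hf).mpr (hs x hx))
  exact splits_iff_card_roots.mpr <| le_antisymm (card_roots' f)
    (hcard.trans ((Finset.card_le_card hsub).trans (Multiset.toFinset_card_le _)))

noncomputable def phi {K : Type*} [Field K] (p : ℕ) (x : K) : K := (x ^ p - x) / p

theorem phiC_eq_phi (p : ℕ) : phiC p = phi p := rfl

section PhiIter

variable {K : Type*} [Field K] {p : ℕ}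

theorem phi_iterate_one_eq_zero (hp : p ≠ 0) {k : ℕ} (hk : 1 ≤ k) : (phi p)^[k] (1 : K) = 0 := by
  obtain ⟨m, rfl⟩ := Nat.exists_eq_add_of_le' hk
  rw [Function.iterate_succ_apply, show phi p (1 : K) = 0 by simp [phi]]
  exact Function.iterate_fixed (by simp [phi, zero_pow hp]) m

theorem phi_iterate_ne_one_of_lt (hp : p ≠ 0) {m n : ℕ} (hmn : m < n) {x : K}
    (hx : (phi p)^[m] x = 1) : (phi p)^[n] x ≠ 1 := by
  rw [← Nat.sub_add_cancel hmn.le, Function.iterate_add_apply, hx,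
    phi_iterate_one_eq_zero hp (by omega)]
  exact zero_ne_one

end PhiIter

/-- `phiIterExp p n = 1 + p + ⋯ + p ^ (n - 1)` is the power of `p` clearing the denominators
of `φ_p^n`. -/
def phiIterExp (p : ℕ) : ℕ → ℕ
  | 0 => 0
  | n + 1 => p * phiIterExp p n + 1

/-- The monic integer polynomial `p ^ phiIterExp p n * φ_p^n(X)`. -/
noncomputable def phiIterPoly (p : ℕ) : ℕ → ℤ[X]
  | 0 => X
  | n + 1 => phiIterPoly p n ^ p - C ((p : ℤ) ^ ((p - 1) * phiIterExp p n)) * phiIterPoly p n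

section PhiIterPoly

variable {p : ℕ}

theorem phiIterPoly_monic_and_natDegree (hp : 1 < p) (n : ℕ) :
    (phiIterPoly p n).Monic ∧ (phiIterPoly p n).natDegree = p ^ n := by
  induction n with
  | zero => exact ⟨monic_X, natDegree_X⟩
  | succ n ih =>
    obtain ⟨hmonic, hdeg⟩ := ih
    have hlt : (C ((p : ℤ) ^ ((p - 1) * phiIterExp p n)) * phiIterPoly p n).natDegree <
        (phiIterPoly p n ^ p).natDegree := by
      rw [natDegree_pow, hdeg]
      exact (natDegree_C_mul_le _ _).trans_lt
        (by rw [hdeg]; exact lt_mul_left (pow_pos (by omega) n) hp)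
    refine ⟨(hmonic.pow p).sub_of_left (degree_lt_degree hlt), ?_⟩
    rw [phiIterPoly, natDegree_sub_eq_left_of_natDegree_lt hlt, natDegree_pow, hdeg, pow_succ,
      mul_comm]

theorem aeval_phiIterPoly {K : Type*} [Field K] (hp : (p : K) ≠ 0) (n : ℕ) (x : K) :
    aeval x (phiIterPoly p n) = (p : K) ^ phiIterExp p n * (phi p)^[n] x := by
  induction n with
  | zero => simp [phiIterPoly, phiIterExp]
  | succ n ih =>
    have hp1 : (p - 1) * phiIterExp p n + phiIterExp p n = p * phiIterExp p n := by
      rcases p with _ | p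
      · simp at hp
      · simp [add_mul]
    simp only [phiIterPoly, phiIterExp, map_sub, map_mul, map_pow, map_natCast, ih,
      Function.iterate_succ_apply', phi]
    rw [mul_pow, ← pow_mul, ← mul_assoc, ← pow_add, hp1, pow_succ, mul_comm (phiIterExp p n) p]
    field_simp

noncomputable def phiIterSubOnePoly (p n : ℕ) : ℤ[X] :=
  phiIterPoly p n - C ((p : ℤ) ^ phiIterExp p n)

theorem phiIterSubOnePoly_monic (hp : 1 < p) (n : ℕ) : (phiIterSubOnePoly p n).Monic := by
  obtain ⟨hmonic, hdeg⟩ := phiIterPoly_monic_and_natDegree hp n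
  exact hmonic.sub_of_left (degree_C_le.trans_lt (by
    rw [degree_eq_natDegree hmonic.ne_zero, hdeg]; exact_mod_cast pow_pos (by omega) n))

theorem phiIterSubOnePoly_natDegree (hp : 1 < p) (n : ℕ) :
    (phiIterSubOnePoly p n).natDegree = p ^ n := by
  rw [phiIterSubOnePoly, natDegree_sub_C, (phiIterPoly_monic_and_natDegree hp n).2]

theorem aeval_phiIterSubOnePoly_eq_zero_iff {K : Type*} [Field K] (hp : (p : K) ≠ 0) (n : ℕ)
    (x : K) : aeval x (phiIterSubOnePoly p n) = 0 ↔ (phi p)^[n] x = 1 := by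
  rw [phiIterSubOnePoly, map_sub, aeval_C, aeval_phiIterPoly hp, eq_intCast, Int.cast_pow,
    Int.cast_natCast, sub_eq_zero, mul_eq_left₀ (pow_ne_zero _ hp)]

theorem isIntegral_of_phi_iterate_eq_one {K : Type*} [Field K] (hp : 1 < p) (hpK : (p : K) ≠ 0)
    {n : ℕ} {x : K} (hx : (phi p)^[n] x = 1) : IsIntegral ℤ x :=
  ⟨phiIterSubOnePoly p n, phiIterSubOnePoly_monic hp n,
    by rw [← aeval_def]; exact (aeval_phiIterSubOnePoly_eq_zero_iff hpK n x).mpr hx⟩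

end PhiIterPoly

theorem Real.log_max_one_le_div_of_pow_le {r c : ℝ} (hc : 1 ≤ c) {k : ℕ} (hk : 0 < k)
    (h : r ^ k ≤ c) : Real.log (max 1 r) ≤ Real.log c / k := by
  have hk' : (0 : ℝ) < k := by exact_mod_cast hk
  rcases le_or_gt r 1 with hr1 | hr1
  · rw [max_eq_left hr1, Real.log_one]
    exact div_nonneg (Real.log_nonneg hc) hk'.le
  · rw [max_eq_right hr1.le, le_div_iff₀ hk', mul_comm, ← Real.log_pow]
    exact Real.log_le_log (pow_pos (by linarith) k) h

section Archimedean

variable {p : ℕ}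

theorem norm_lt_norm_phi {x : ℂ} (hx : (p : ℝ) + 1 < ‖x‖ ^ (p - 1)) : ‖x‖ < ‖phi p x‖ := by
  have hp : p ≠ 0 := by rintro rfl; norm_num at hx
  have hx0 : 0 < ‖x‖ := by
    by_contra! h
    linarith [pow_le_one₀ (n := p - 1) (norm_nonneg x) (h.trans zero_le_one),
      (Nat.cast_nonneg p : (0 : ℝ) ≤ p)]
  have hpx : (p : ℝ) * ‖phi p x‖ = ‖x ^ p - x‖ := by
    rw [phi, norm_div, Complex.norm_natCast, mul_div_cancel₀ _ (by exact_mod_cast hp)]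
  have hpow : ‖x‖ ^ p = ‖x‖ ^ (p - 1) * ‖x‖ := by rw [← pow_succ, Nat.sub_add_cancel (by omega)]
  have : (p : ℝ) * ‖x‖ < (p : ℝ) * ‖phi p x‖ := by
    rw [hpx]
    calc (p : ℝ) * ‖x‖ = ((p : ℝ) + 1) * ‖x‖ - ‖x‖ := by ring
      _ < ‖x‖ ^ p - ‖x‖ := by rw [hpow]; gcongr
      _ = ‖x ^ p‖ - ‖x‖ := by rw [norm_pow]
      _ ≤ ‖x ^ p - x‖ := norm_sub_norm_le _ _
  exact lt_of_mul_lt_mul_left this (Nat.cast_nonneg p)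

theorem norm_le_norm_phi_iterate {x : ℂ} (hx : (p : ℝ) + 1 < ‖x‖ ^ (p - 1)) (n : ℕ) :
    ‖x‖ ≤ ‖(phi p)^[n] x‖ := by
  induction n with
  | zero => rfl
  | succ n ih =>
    rw [Function.iterate_succ_apply']
    exact ih.trans (norm_lt_norm_phi (hx.trans_le (by gcongr))).le

theorem norm_pow_le_of_phi_iterate_eq_one {n : ℕ} {x : ℂ} (hx : (phi p)^[n] x = 1) :
    ‖x‖ ^ (p - 1) ≤ p + 1 := by
  by_contra! h
  have hx1 : ‖x‖ ≤ 1 := by simpa [hx] using norm_le_norm_phi_iterate h n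
  linarith [pow_le_one₀ (n := p - 1) (norm_nonneg x) hx1, (Nat.cast_nonneg p : (0 : ℝ) ≤ p)]

end Archimedean

theorem ratDen_minpoly_eq_one {x : ℂ} (hx : IsIntegral ℤ x) : ratDen (minpoly ℚ x) = 1 := by
  refine Nat.dvd_one.mp (Finset.lcm_dvd fun i _ => ?_)
  rw [minpoly.isIntegrallyClosed_eq_field_fractions' ℚ hx, coeff_map, eq_intCast, Rat.den_intCast]

theorem weilHeight_le_of_isIntegral {x : ℂ} (hx : IsIntegral ℤ x) {b : ℝ}
    (hb : ∀ β ∈ (minpoly ℚ x).aroots ℂ, Real.log (max 1 ‖β‖) ≤ b) : weilHeight x ≤ b := by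
  set d := (minpoly ℚ x).natDegree
  have hd : (0 : ℝ) < d := by exact_mod_cast minpoly.natDegree_pos hx.tower_top
  have hcard : Multiset.card ((minpoly ℚ x).aroots ℂ) = d := by
    rw [aroots_def, IsAlgClosed.card_roots_eq_natDegree, natDegree_map]
  have hsum := Multiset.sum_le_card_nsmul
    (((minpoly ℚ x).aroots ℂ).map fun β => Real.log (max 1 ‖β‖)) b
    (by simpa only [Multiset.mem_map, forall_exists_index, and_imp, forall_apply_eq_imp_iff₂])
  rw [Multiset.card_map, hcard, nsmul_eq_mul] at hsum
  rw [weilHeight, ratDen_minpoly_eq_one hx, Nat.cast_one, Real.log_one, zero_add,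
    inv_mul_le_iff₀ hd]
  exact hsum

section Minpoly

variable {K : Type*} [Field K] [CharZero K] {p n : ℕ}

theorem minpoly_dvd_phiIterSubOnePoly (hp : p ≠ 0) {x : K} (hx : (phi p)^[n] x = 1) :
    minpoly ℚ x ∣ (phiIterSubOnePoly p n).map (algebraMap ℤ ℚ) :=
  minpoly.dvd ℚ x (by
    rw [aeval_map_algebraMap, aeval_phiIterSubOnePoly_eq_zero_iff (Nat.cast_ne_zero.mpr hp), hx])

theorem phi_iterate_eq_one_of_mem_aroots_minpoly (hp : p ≠ 0) {x β : K}
    (hx : (phi p)^[n] x = 1) (hβ : β ∈ (minpoly ℚ x).aroots K) : (phi p)^[n] β = 1 := by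
  rw [← aeval_phiIterSubOnePoly_eq_zero_iff (Nat.cast_ne_zero.mpr hp), ← aeval_map_algebraMap ℚ]
  exact aeval_eq_zero_of_dvd_aeval_eq_zero (minpoly_dvd_phiIterSubOnePoly hp hx)
    (mem_aroots.mp hβ).2

end Minpoly

theorem weilHeight_le_of_phi_iterate_eq_one {p n : ℕ} (hp : 1 < p) {x : ℂ}
    (hx : (phi p)^[n] x = 1) : weilHeight x ≤ Real.log ((p : ℝ) + 1) / ((p : ℝ) - 1) := by
  have hcast : (p : ℝ) - 1 = ((p - 1 : ℕ) : ℝ) := by rw [Nat.cast_sub hp.le, Nat.cast_one]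
  refine weilHeight_le_of_isIntegral
    (isIntegral_of_phi_iterate_eq_one hp (Nat.cast_ne_zero.mpr (by omega)) hx) fun β hβ => ?_
  rw [hcast]
  exact Real.log_max_one_le_div_of_pow_le (by linarith [(Nat.cast_nonneg p : (0:ℝ) ≤ p)])
    (by omega) (norm_pow_le_of_phi_iterate_eq_one
      (phi_iterate_eq_one_of_mem_aroots_minpoly (by omega) hx hβ))

section PAdic

variable {p : ℕ} [Fact p.Prime]

theorem PadicInt.toZMod_eq_zero_iff_norm_lt_one (x : ℤ_[p]) :
    PadicInt.toZMod x = 0 ↔ ‖x‖ < 1 := by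
  rw [← RingHom.mem_ker, PadicInt.ker_toZMod, IsLocalRing.mem_maximalIdeal, PadicInt.mem_nonunits]

/-- Hensel's lemma applies at every residue class since `X ^ p - X - p * y` reduces mod `p`
to `X ^ p - X`, which vanishes on `𝔽_p` and has derivative `-1`. -/
theorem PadicInt.exists_pow_sub_eq_mul_toZMod_eq (y : ℤ_[p]) (a : ZMod p) :
    ∃ z : ℤ_[p], z ^ p - z = p * y ∧ PadicInt.toZMod z = a := by
  set F : ℤ_[p][X] := X ^ p - X - C ((p : ℤ_[p]) * y)
  set a₀ : ℤ_[p] := (a.val : ℤ_[p])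
  have ha₀ : PadicInt.toZMod a₀ = a := by simp [a₀]
  have hp : PadicInt.toZMod (p : ℤ_[p]) = 0 := by simp
  have hF : ‖F.aeval a₀‖ < 1 := by
    rw [← PadicInt.toZMod_eq_zero_iff_norm_lt_one]
    simp [F, ha₀, hp, ZMod.pow_card]
  have hF' : ‖F.derivative.aeval a₀‖ = 1 := by
    refine le_antisymm (PadicInt.norm_le_one _) (not_lt.mp fun h => ?_)
    rw [← PadicInt.toZMod_eq_zero_iff_norm_lt_one] at h
    simp [F, derivative_X_pow, hp] at h
  obtain ⟨z, hz, hza, -, -⟩ := hensels_lemma (F := F) (a := a₀) (by rw [hF', one_pow]; exact hF)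
  refine ⟨z, ?_, ?_⟩
  · simpa [F, sub_eq_zero] using hz
  · rw [hF', ← PadicInt.toZMod_eq_zero_iff_norm_lt_one, map_sub, sub_eq_zero, ha₀] at hza
    exact hza

theorem exists_finset_card_phi_eq (y : ℚ_[p]) (hy : ‖y‖ ≤ 1) :
    ∃ t : Finset ℚ_[p], t.card = p ∧ ∀ x ∈ t, ‖x‖ ≤ 1 ∧ phi p x = y := by
  classical
  let y' : ℤ_[p] := ⟨y, hy⟩
  choose z hz hza using PadicInt.exists_pow_sub_eq_mul_toZMod_eq y'
  have hinj : Function.Injective fun a => (z a : ℚ_[p]) := fun a b hab => by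
    rw [← hza a, ← hza b, Subtype.coe_injective hab]
  refine ⟨Finset.univ.image fun a => (z a : ℚ_[p]), ?_, ?_⟩
  · rw [Finset.card_image_of_injective _ hinj, Finset.card_univ, ZMod.card]
  · simp only [Finset.mem_image, Finset.mem_univ, true_and, forall_exists_index,
      forall_apply_eq_imp_iff]
    intro a
    refine ⟨PadicInt.norm_le_one _, ?_⟩
    have h : (z a : ℚ_[p]) ^ p - z a = p * y := by
      simpa using congrArg ((↑) : ℤ_[p] → ℚ_[p]) (hz a)
    rw [phi, h, mul_div_cancel_left₀ y (Nat.cast_ne_zero.mpr (Fact.out : p.Prime).ne_zero)]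

theorem phiIterSubOnePoly_map_padic_splits (n : ℕ) :
    ((phiIterSubOnePoly p n).map (algebraMap ℤ ℚ_[p])).Splits := by
  have hp : (p : ℚ_[p]) ≠ 0 := Nat.cast_ne_zero.mpr (Fact.out : p.Prime).ne_zero
  have hmonic := phiIterSubOnePoly_monic (Fact.out : p.Prime).one_lt n
  obtain ⟨t, ht_card, ht⟩ := Function.exists_finset_card_pow_iterate_eq (phi p) {x | ‖x‖ ≤ 1} p
    exists_finset_card_phi_eq n 1 (by simp)
  refine splits_of_natDegree_le_card (hmonic.map _).ne_zero t (fun x hx => ?_) ?_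
  · rw [IsRoot, eval_map_algebraMap, aeval_phiIterSubOnePoly_eq_zero_iff hp]
    exact (ht x hx).2
  · rw [hmonic.natDegree_map, phiIterSubOnePoly_natDegree (Fact.out : p.Prime).one_lt, ht_card]

theorem minpoly_map_padic_splits_of_phi_iterate_eq_one {n : ℕ} {x : ℂ}
    (hx : (phi p)^[n] x = 1) : ((minpoly ℚ x).map (algebraMap ℚ ℚ_[p])).Splits := by
  have hmap : ((phiIterSubOnePoly p n).map (algebraMap ℤ ℚ)).map (algebraMap ℚ ℚ_[p]) =
      (phiIterSubOnePoly p n).map (algebraMap ℤ ℚ_[p]) := by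
    rw [Polynomial.map_map, ← IsScalarTower.algebraMap_eq]
  have hsplits := phiIterSubOnePoly_map_padic_splits (p := p) n
  rw [← hmap] at hsplits
  exact hsplits.of_dvd (Polynomial.map_ne_zero ((phiIterSubOnePoly_monic
    (Fact.out : p.Prime).one_lt n).map _).ne_zero) (Polynomial.map_dvd _
      (minpoly_dvd_phiIterSubOnePoly (Fact.out : p.Prime).ne_zero hx))

end PAdic

/-- (Theorem 1 of the paper.)  Let `p` be a prime and for each `n ≥ 1`
let `α_n ∈ ℚ̄` satisfy `φ_p^n(α_n) = 1`.  Then the `α_n` are pairwise distinct totally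
`p`-adic algebraic numbers with `h(α_n) ≤ log(p+1)/(p−1)`.  In particular, for every
`B > log(p+1)/(p−1)` the set of totally `p`-adic algebraic numbers of height at most `B`
is infinite. -/
theorem totally_p_adic_small_height_sequence (p : ℕ) [Fact p.Prime] (α : ℕ → ℂ)
    (hα : ∀ n : ℕ, 1 ≤ n → (phiC p)^[n] (α n) = 1) :
    (∀ m n : ℕ, 1 ≤ m → 1 ≤ n → m ≠ n → α m ≠ α n) ∧
    (∀ n : ℕ, 1 ≤ n →
      IsAlgebraic ℚ (α n) ∧ ((minpoly ℚ (α n)).map (algebraMap ℚ ℚ_[p])).Splits) ∧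
    (∀ n : ℕ, 1 ≤ n → weilHeight (α n) ≤ Real.log ((p : ℝ) + 1) / ((p : ℝ) - 1)) ∧
    (∀ B : ℝ, Real.log ((p : ℝ) + 1) / ((p : ℝ) - 1) < B →
      {x : ℂ | IsAlgebraic ℚ x ∧ ((minpoly ℚ x).map (algebraMap ℚ ℚ_[p])).Splits ∧
        weilHeight x ≤ B}.Infinite) := by
  have hp : p.Prime := Fact.out
  rw [phiC_eq_phi] at hα
  have hdistinct : ∀ m n : ℕ, 1 ≤ m → 1 ≤ n → m ≠ n → α m ≠ α n := by
    intro m n hm hn hmn heq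
    rcases hmn.lt_or_gt with hlt | hlt
    · exact phi_iterate_ne_one_of_lt hp.ne_zero hlt (hα m hm) (heq ▸ hα n hn)
    · exact phi_iterate_ne_one_of_lt hp.ne_zero hlt (heq ▸ hα n hn) (hα m hm)
  have htotally : ∀ n : ℕ, 1 ≤ n →
      IsAlgebraic ℚ (α n) ∧ ((minpoly ℚ (α n)).map (algebraMap ℚ ℚ_[p])).Splits := fun n hn =>
    ⟨(isIntegral_of_phi_iterate_eq_one hp.one_lt (Nat.cast_ne_zero.mpr hp.ne_zero)
      (hα n hn)).tower_top.isAlgebraic, minpoly_map_padic_splits_of_phi_iterate_eq_one (hα n hn)⟩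
  have hheight : ∀ n : ℕ, 1 ≤ n → weilHeight (α n) ≤ Real.log ((p : ℝ) + 1) / ((p : ℝ) - 1) :=
    fun n hn => weilHeight_le_of_phi_iterate_eq_one hp.one_lt (hα n hn)
  refine ⟨hdistinct, htotally, hheight, fun B hB => ?_⟩
  refine Set.infinite_of_injective_forall_mem (f := fun k => α (k + 1))
    (fun a b hab => Nat.succ_injective (not_ne_iff.mp fun hne =>
      hdistinct _ _ (by omega) (by omega) hne hab))
    fun k => ⟨(htotally _ k.succ_pos).1, (htotally _ k.succ_pos).2,
      (hheight _ k.succ_pos).trans hB.le⟩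
end
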